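/- arXiv:0803.0572 — 7 statements merged into one kernel-verified Lean document; each statement's English description precedes it below -/
import Mathlib

section
/- For every integer n ≥ 2, there exists an edge-coloring of K_{2,n} using exactly ⌈3n/2⌉ colors such that every subgraph isomorphic to K_{2,3} receives at least 5 distinct colors. -/
/-- There is an edge-coloring of K_{2,n} with exactly ⌈3n/2⌉ colors in which every
copy of K_{2,3} receives at least 5 colors. -/
theorem stmt_2 (n : ℕ) (hn : 2 ≤ n) :
    ∃ c : Fin 2 → Fin n → ℕ,
      ((Finset.univ : Finset (Fin 2 × Fin n)).image (fun p => c p.1 p.2)).card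
        = (3 * n + 1) / 2 ∧
      (∀ i j k : Fin n, i ≠ j → i ≠ k → j ≠ k →
        5 ≤ ({c 0 i, c 0 j, c 0 k, c 1 i, c 1 j, c 1 k} : Finset ℕ).card) := by
  refine ⟨![fun i : Fin n => if (i : ℕ) < n / 2 then (i : ℕ) else n + i,
      fun i : Fin n => if n - n / 2 ≤ (i : ℕ) then n - 1 - (i : ℕ) else 2 * n + i], ?_, ?_⟩
  · have himg : ((Finset.univ : Finset (Fin 2 × Fin n)).image
        (fun p => ![fun i : Fin n => if (i : ℕ) < n / 2 then (i : ℕ) else n + i,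
          fun i : Fin n => if n - n / 2 ≤ (i : ℕ) then n - 1 - (i : ℕ) else 2 * n + i] p.1 p.2))
        = Finset.range (n / 2) ∪ Finset.Ico (n + n / 2) (2 * n)
          ∪ Finset.Ico (2 * n) (2 * n + (n - n / 2)) := by
      ext x
      simp only [Finset.mem_image, Finset.mem_univ, true_and, Prod.exists,
        Fin.exists_fin_two, Matrix.cons_val_zero, Matrix.cons_val_one, Matrix.head_cons,
        Finset.mem_union, Finset.mem_range, Finset.mem_Ico]
      constructor
      · rintro (⟨i, hi⟩ | ⟨i, hi⟩) <;> have := i.isLt <;> split_ifs at hi <;> omega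
      · rintro ((h | h) | h)
        · refine Or.inl ⟨⟨x, by omega⟩, ?_⟩
          show (if x < n / 2 then x else n + x) = x
          split_ifs <;> omega
        · refine Or.inl ⟨⟨x - n, by omega⟩, ?_⟩
          show (if x - n < n / 2 then x - n else n + (x - n)) = x
          split_ifs <;> omega
        · refine Or.inr ⟨⟨x - 2 * n, by omega⟩, ?_⟩
          show (if n - n / 2 ≤ x - 2 * n then n - 1 - (x - 2 * n) else 2 * n + (x - 2 * n)) = x
          split_ifs <;> omega
    rw [himg]
    rw [Finset.card_union_of_disjoint, Finset.card_union_of_disjoint]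
    · simp only [Finset.card_range, Nat.card_Ico]
      omega
    · rw [Finset.disjoint_left]; intro a ha hb
      simp only [Finset.mem_range, Finset.mem_Ico] at ha hb; omega
    · rw [Finset.disjoint_left]; intro a ha hb
      simp only [Finset.mem_union, Finset.mem_range, Finset.mem_Ico] at ha hb; omega
  · intro i j k hij hik hjk
    have hij' : (i : ℕ) ≠ j := fun h => hij (Fin.ext h)
    have hik' : (i : ℕ) ≠ k := fun h => hik (Fin.ext h)
    have hjk' : (j : ℕ) ≠ k := fun h => hjk (Fin.ext h)
    have hi := i.isLt; have hj := j.isLt; have hk := k.isLt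
    simp only [Matrix.cons_val_zero, Matrix.cons_val_one, Matrix.head_cons]
    have key : ∀ (x a b : ℕ), a < n → b < n →
        x = (if a < n / 2 then a else n + a) →
        x = (if n - n / 2 ≤ b then n - 1 - b else 2 * n + b) →
        x = a ∧ a + b = n - 1 ∧ a < n / 2 ∧ n - n / 2 ≤ b := by
      intro x a b ha hb h1 h2
      subst h1
      split_ifs at h2 ⊢ <;> omega
    have hsplit : ({(if (i : ℕ) < n / 2 then (i : ℕ) else n + i),
        (if (j : ℕ) < n / 2 then (j : ℕ) else n + j),
        (if (k : ℕ) < n / 2 then (k : ℕ) else n + k),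
        (if n - n / 2 ≤ (i : ℕ) then n - 1 - (i : ℕ) else 2 * n + i),
        (if n - n / 2 ≤ (j : ℕ) then n - 1 - (j : ℕ) else 2 * n + j),
        (if n - n / 2 ≤ (k : ℕ) then n - 1 - (k : ℕ) else 2 * n + k)} : Finset ℕ)
        = ({(if (i : ℕ) < n / 2 then (i : ℕ) else n + i),
        (if (j : ℕ) < n / 2 then (j : ℕ) else n + j),
        (if (k : ℕ) < n / 2 then (k : ℕ) else n + k)} : Finset ℕ)
        ∪ ({(if n - n / 2 ≤ (i : ℕ) then n - 1 - (i : ℕ) else 2 * n + i),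
        (if n - n / 2 ≤ (j : ℕ) then n - 1 - (j : ℕ) else 2 * n + j),
        (if n - n / 2 ≤ (k : ℕ) then n - 1 - (k : ℕ) else 2 * n + k)} : Finset ℕ) := by
      ext x
      simp only [Finset.mem_insert, Finset.mem_singleton, Finset.mem_union]
      tauto
    rw [hsplit]
    have hA : ({(if (i : ℕ) < n / 2 then (i : ℕ) else n + i),
        (if (j : ℕ) < n / 2 then (j : ℕ) else n + j),
        (if (k : ℕ) < n / 2 then (k : ℕ) else n + k)} : Finset ℕ).card = 3 := by
      rw [Finset.card_insert_of_notMem, Finset.card_insert_of_notMem, Finset.card_singleton]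
      · simp only [Finset.mem_singleton]; split_ifs <;> omega
      · simp only [Finset.mem_insert, Finset.mem_singleton]
        push_neg
        constructor <;> split_ifs <;> omega
    have hB : ({(if n - n / 2 ≤ (i : ℕ) then n - 1 - (i : ℕ) else 2 * n + i),
        (if n - n / 2 ≤ (j : ℕ) then n - 1 - (j : ℕ) else 2 * n + j),
        (if n - n / 2 ≤ (k : ℕ) then n - 1 - (k : ℕ) else 2 * n + k)} : Finset ℕ).card = 3 := by
      rw [Finset.card_insert_of_notMem, Finset.card_insert_of_notMem, Finset.card_singleton]
      · simp only [Finset.mem_singleton]; split_ifs <;> omega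
      · simp only [Finset.mem_insert, Finset.mem_singleton]
        push_neg
        constructor <;> split_ifs <;> omega
    have h6 := Finset.card_union_add_card_inter
      ({(if (i : ℕ) < n / 2 then (i : ℕ) else n + i),
        (if (j : ℕ) < n / 2 then (j : ℕ) else n + j),
        (if (k : ℕ) < n / 2 then (k : ℕ) else n + k)} : Finset ℕ)
      ({(if n - n / 2 ≤ (i : ℕ) then n - 1 - (i : ℕ) else 2 * n + i),
        (if n - n / 2 ≤ (j : ℕ) then n - 1 - (j : ℕ) else 2 * n + j),
        (if n - n / 2 ≤ (k : ℕ) then n - 1 - (k : ℕ) else 2 * n + k)} : Finset ℕ)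
    have hinter : (({(if (i : ℕ) < n / 2 then (i : ℕ) else n + i),
        (if (j : ℕ) < n / 2 then (j : ℕ) else n + j),
        (if (k : ℕ) < n / 2 then (k : ℕ) else n + k)} : Finset ℕ)
        ∩ ({(if n - n / 2 ≤ (i : ℕ) then n - 1 - (i : ℕ) else 2 * n + i),
        (if n - n / 2 ≤ (j : ℕ) then n - 1 - (j : ℕ) else 2 * n + j),
        (if n - n / 2 ≤ (k : ℕ) then n - 1 - (k : ℕ) else 2 * n + k)} : Finset ℕ)).card ≤ 1 := by
      rw [Finset.card_le_one]
      intro x hx y hy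
      simp only [Finset.mem_inter, Finset.mem_insert, Finset.mem_singleton] at hx hy
      obtain ⟨hx1 | hx1 | hx1, hx2 | hx2 | hx2⟩ := hx <;>
        obtain ⟨hy1 | hy1 | hy1, hy2 | hy2 | hy2⟩ := hy <;>
        (obtain ⟨a1, a2, a3, a4⟩ := key _ _ _ (by omega) (by omega) hx1 hx2;
         obtain ⟨b1, b2, b3, b4⟩ := key _ _ _ (by omega) (by omega) hy1 hy2;
         omega)
    omega
end

section
/- Let c be an edge-coloring of K_{2,n} with parts {u,v} and {v_1,...,v_n} such that every copy of K_{2,3} receives at least 5 colors. Then no color appears on more than two edges incident to u, i.e., each color is used at most twice among the edges {(u,v_i) : 1 ≤ i ≤ n}. -/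
/-- In an edge-coloring of K_{2,n} in which every copy of K_{2,3} gets ≥ 5 colors,
each color appears on at most two edges incident to u. -/
theorem stmt_7 (n : ℕ) (hn : 2 ≤ n) (c : Fin 2 → Fin n → ℕ)
    (hK23 : ∀ i j k : Fin n, i ≠ j → i ≠ k → j ≠ k →
      5 ≤ ({c 0 i, c 0 j, c 0 k, c 1 i, c 1 j, c 1 k} : Finset ℕ).card) :
    ∀ a : ℕ, (Finset.univ.filter (fun i : Fin n => c 0 i = a)).card ≤ 2 := by
  intro a
  by_contra h
  push_neg at h
  obtain ⟨i, j, k, hi, hj, hk, hij, hik, hjk⟩ := Finset.two_lt_card_iff.mp h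
  simp only [Finset.mem_filter] at hi hj hk
  have h5 := hK23 i j k hij hik hjk
  rw [hi.2, hj.2, hk.2] at h5
  have : ({a, a, a, c 1 i, c 1 j, c 1 k} : Finset ℕ).card ≤ 4 := by
    simp only [Finset.insert_idem]
    apply le_trans (Finset.card_insert_le _ _)
    apply Nat.succ_le_succ
    apply le_trans (Finset.card_insert_le _ _)
    apply Nat.succ_le_succ
    apply le_trans (Finset.card_insert_le _ _)
    simp
  omega
end

section
/- Let n ≥ 5 and let c be an edge-coloring of K_n such that every 5-vertex subset spans at least 9 colors. Suppose c is not proper, i.e., there exist incident edges (v_1,v_2) and (v_1,v_3) with c(v_1,v_2) = c(v_1,v_3). Then all edges of K_n incident to the set {v_1, v_2, v_3} receive pairwise distinct colors, with the single exception of the pair (v_1,v_2), (v_1,v_3). -/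
open Finset

lemma finset_pair_eq {α : Type*} [DecidableEq α] {x y z w : α} :
    ({x, y} : Finset α) = {z, w} ↔ x = z ∧ y = w ∨ x = w ∧ y = z := by
  rw [← Finset.coe_inj]
  simpa using Set.pair_eq_pair_iff

lemma two_coll {α β : Type*} [DecidableEq α] [DecidableEq β] (s : Finset α) (f : α → β)
    {a b c d : α} (ha : a ∈ s) (hb : b ∈ s) (hc : c ∈ s) (hd : d ∈ s)
    (hab : a ≠ b) (hcd : c ≠ d) (hfab : f a = f b) (hfcd : f c = f d)
    (h1 : ¬(a = c ∧ b = d)) (h2 : ¬(a = d ∧ b = c)) :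
    (s.image f).card ≤ s.card - 2 := by
  have key : ∃ x y, x ≠ y ∧ x ∈ s ∧ y ∈ s ∧
      ∀ z ∈ s, ∃ w ∈ (s.erase x).erase y, f w = f z := by
    by_cases hbd : b = d
    · have hac : a ≠ c := fun h => h1 ⟨h, hbd⟩
      refine ⟨a, c, hac, ha, hc, fun z hz => ?_⟩
      by_cases hza : z = a
      · exact ⟨b, by simp [Finset.mem_erase, hab.symm, hb, show b ≠ c from fun h => hcd (h ▸ hbd)], by
          rw [hza, hfab]⟩
      · by_cases hzc : z = c
        · exact ⟨d, by simp [Finset.mem_erase, hd, hcd.symm, show d ≠ a from fun h => hab (hbd ▸ h).symm], by rw [hzc, hfcd]⟩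
        · exact ⟨z, by simp [Finset.mem_erase, hza, hzc, hz], rfl⟩
    · by_cases hbc : b = c
      · have had : a ≠ d := fun h => h2 ⟨h, hbc⟩
        refine ⟨a, d, had, ha, hd, fun z hz => ?_⟩
        by_cases hza : z = a
        · exact ⟨b, by simp [Finset.mem_erase, hab.symm, hb, show b ≠ d from hbc ▸ hcd], by rw [hza, hfab]⟩
        · by_cases hzd : z = d
          · exact ⟨c, by simp [Finset.mem_erase, hc, hcd, show c ≠ a from fun h => hab (hbc.trans h).symm], by rw [hzd, ← hfcd]⟩
          · exact ⟨z, by simp [Finset.mem_erase, hza, hzd, hz], rfl⟩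
      · refine ⟨b, d, hbd, hb, hd, fun z hz => ?_⟩
        by_cases hzb : z = b
        · by_cases had : a = d
          · refine ⟨c, by simp [Finset.mem_erase, hc, hcd, show c ≠ b from fun h => hbc h.symm], ?_⟩
            rw [hzb, ← hfab, had, hfcd]
          · exact ⟨a, by simp [Finset.mem_erase, hab, had, ha], by rw [hzb, hfab]⟩
        · by_cases hzd : z = d
          · exact ⟨c, by simp [Finset.mem_erase, hc, hcd, show c ≠ b from fun h => hbc h.symm], by
              rw [hzd, hfcd]⟩
          · exact ⟨z, by simp [Finset.mem_erase, hzb, hzd, hz], rfl⟩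
  obtain ⟨x, y, hxy, hxs, hys, hcov⟩ := key
  have himg : s.image f ⊆ ((s.erase x).erase y).image f := by
    intro v hv
    rw [Finset.mem_image] at hv ⊢
    obtain ⟨z, hz, rfl⟩ := hv
    obtain ⟨w, hw, hfw⟩ := hcov z hz
    exact ⟨w, hw, hfw⟩
  calc (s.image f).card ≤ (((s.erase x).erase y).image f).card := Finset.card_le_card himg
    _ ≤ ((s.erase x).erase y).card := Finset.card_image_le
    _ = s.card - 2 := by
        rw [Finset.card_erase_of_mem (Finset.mem_erase.2 ⟨hxy.symm, hys⟩),
          Finset.card_erase_of_mem hxs]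
        omega

section sorted
variable {n : ℕ}

/-- sorted edge -/
def sedge (u w : Fin n) : Fin n × Fin n := (min u w, max u w)

lemma sedge_pair (u w : Fin n) : ({(sedge u w).1, (sedge u w).2} : Finset (Fin n)) = {u, w} := by
  rcases le_total u w with h | h
  · simp [sedge, min_eq_left h, max_eq_right h]
  · simp [sedge, min_eq_right h, max_eq_left h, Finset.pair_comm]

lemma sedge_eq {u w u' w' : Fin n} (h : sedge u w = sedge u' w') :
    ({u, w} : Finset (Fin n)) = {u', w'} := by
  rw [← sedge_pair u w, ← sedge_pair u' w', h]

lemma sedge_col (col : Fin n → Fin n → ℕ) (hsym : ∀ x y, col x y = col y x) (u w : Fin n) :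
    col (sedge u w).1 (sedge u w).2 = col u w := by
  rcases le_total u w with h | h
  · simp [sedge, min_eq_left h, max_eq_right h]
  · simp [sedge, min_eq_right h, max_eq_left h, hsym u w]

lemma sedge_lt {u w : Fin n} (h : u ≠ w) : (sedge u w).1 < (sedge u w).2 :=
  min_lt_max.2 h

end sorted

/-- K_n, every 5-subset spans ≥ 9 colors, and c is not proper at v₁ (c(v₁v₂)=c(v₁v₃)).
Then all edges incident to {v₁,v₂,v₃} get pairwise distinct colors except that pair. -/
theorem stmt_9 (n : ℕ) (hn : 5 ≤ n) (col : Fin n → Fin n → ℕ)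
    (hsym : ∀ x y, col x y = col y x)
    (h5 : ∀ s : Finset (Fin n), s.card = 5 →
      9 ≤ (s.offDiag.image (fun p => col p.1 p.2)).card)
    (v1 v2 v3 : Fin n) (h12 : v1 ≠ v2) (h13 : v1 ≠ v3) (h23 : v2 ≠ v3)
    (hrep : col v1 v2 = col v1 v3) :
    ∀ x1 y1 x2 y2 : Fin n, x1 ≠ y1 → x2 ≠ y2 →
      (x1 ∈ ({v1, v2, v3} : Finset (Fin n)) ∨ y1 ∈ ({v1, v2, v3} : Finset (Fin n))) →
      (x2 ∈ ({v1, v2, v3} : Finset (Fin n)) ∨ y2 ∈ ({v1, v2, v3} : Finset (Fin n))) →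
      ({x1, y1} : Finset (Fin n)) ≠ {x2, y2} →
      ¬(({x1, y1} : Finset (Fin n)) = {v1, v2} ∧ ({x2, y2} : Finset (Fin n)) = {v1, v3}) →
      ¬(({x1, y1} : Finset (Fin n)) = {v1, v3} ∧ ({x2, y2} : Finset (Fin n)) = {v1, v2}) →
      col x1 y1 ≠ col x2 y2 := by
  classical
  intro x1 y1 x2 y2 hne1 hne2 hinc1 hinc2 hdiff hexc1 hexc2 heq
  set S : Finset (Fin n) := {v1, v2, v3} with hS
  set a1 : Fin n := if x1 ∈ S then y1 else x1 with ha1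
  set a2 : Fin n := if x2 ∈ S then y2 else x2 with ha2
  set V : Finset (Fin n) := insert a1 (insert a2 S) with hV
  have hVcard : V.card ≤ 5 := by
    have h3 : S.card ≤ 3 := by
      apply (Finset.card_insert_le _ _).trans
      apply Nat.succ_le_succ
      apply (Finset.card_insert_le _ _).trans
      simp
    calc V.card ≤ (insert a2 S).card + 1 := Finset.card_insert_le _ _
      _ ≤ (S.card + 1) + 1 := by have := Finset.card_insert_le a2 S; omega
      _ ≤ 5 := by omega
  obtain ⟨T, hVT, -, hT5⟩ := Finset.exists_subsuperset_card_eq (Finset.subset_univ V) hVcard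
    (by simpa using hn)
  have hST : S ⊆ T := fun z hz => hVT (by simp [hV, hz])
  have hv1 : v1 ∈ T := hST (by simp [hS])
  have hv2 : v2 ∈ T := hST (by simp [hS])
  have hv3 : v3 ∈ T := hST (by simp [hS])
  have hx1 : x1 ∈ T ∧ y1 ∈ T := by
    by_cases h : x1 ∈ S
    · exact ⟨hST h, hVT (by simp [hV, ha1, h])⟩
    · exact ⟨hVT (by simp [hV, ha1, h]), hST (hinc1.resolve_left h)⟩
  have hx2 : x2 ∈ T ∧ y2 ∈ T := by
    by_cases h : x2 ∈ S
    · exact ⟨hST h, hVT (by simp [hV, ha2, h])⟩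
    · exact ⟨hVT (by simp [hV, ha2, h]), hST (hinc2.resolve_left h)⟩
  set F : Finset (Fin n × Fin n) := T.offDiag.filter (fun p => p.1 < p.2) with hF
  have himg : T.offDiag.image (fun p => col p.1 p.2) = F.image (fun p => col p.1 p.2) := by
    apply Finset.Subset.antisymm
    · intro v hv
      rw [Finset.mem_image] at hv ⊢
      obtain ⟨p, hp, rfl⟩ := hv
      rw [Finset.mem_offDiag] at hp
      rcases lt_or_gt_of_ne hp.2.2 with h | h
      · exact ⟨p, Finset.mem_filter.2 ⟨Finset.mem_offDiag.2 hp, h⟩, rfl⟩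
      · exact ⟨(p.2, p.1), Finset.mem_filter.2
          ⟨Finset.mem_offDiag.2 ⟨hp.2.1, hp.1, hp.2.2.symm⟩, h⟩, hsym p.2 p.1⟩
    · exact Finset.image_subset_image (Finset.filter_subset _ _)
  have hFcard : F.card ≤ 10 := by
    have hmain := Finset.card_le_card_of_injOn (s := F) (t := T.powersetCard 2)
      (fun p => ({p.1, p.2} : Finset (Fin n)))
      (fun p hp => by
        rw [Finset.mem_coe, hF, Finset.mem_filter, Finset.mem_offDiag] at hp
        rw [Finset.mem_coe, Finset.mem_powersetCard]
        exact ⟨Finset.insert_subset hp.1.1 (Finset.singleton_subset_iff.2 hp.1.2.1),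
          Finset.card_pair (ne_of_lt hp.2)⟩)
      (by
        intro p hp q hq hpq
        rw [Finset.mem_coe, hF, Finset.mem_filter] at hp hq
        rcases finset_pair_eq.1 hpq with ⟨h1, h2⟩ | ⟨h1, h2⟩
        · exact Prod.ext h1 h2
        · exact absurd (lt_trans (hp.2.trans_eq h2) (hq.2.trans_eq h1.symm)) (lt_irrefl _))
    rw [Finset.card_powersetCard, hT5] at hmain
    exact hmain.trans (by decide)
  have memF : ∀ u w : Fin n, u ∈ T → w ∈ T → u ≠ w → sedge u w ∈ F := by
    intro u w hu hw huw
    rw [hF, Finset.mem_filter, Finset.mem_offDiag]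
    refine ⟨⟨?_, ?_, ne_of_lt (sedge_lt huw)⟩, sedge_lt huw⟩
    · rcases le_total u w with h | h <;>
        simp [sedge, min_eq_left, min_eq_right, h, hu, hw]
    · rcases le_total u w with h | h <;>
        simp [sedge, max_eq_right, max_eq_left, h, hu, hw]
  have hcoll := two_coll F (fun p => col p.1 p.2)
    (memF v1 v2 hv1 hv2 h12) (memF v1 v3 hv1 hv3 h13)
    (memF x1 y1 hx1.1 hx1.2 hne1) (memF x2 y2 hx2.1 hx2.2 hne2)
    (fun h => by
      rcases finset_pair_eq.1 (sedge_eq h) with ⟨-, h'⟩ | ⟨h', -⟩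
      · exact h23 h'
      · exact h13 h')
    (fun h => hdiff (sedge_eq h))
    (by show col _ _ = col _ _; rw [sedge_col col hsym, sedge_col col hsym]; exact hrep)
    (by show col _ _ = col _ _; rw [sedge_col col hsym, sedge_col col hsym]; exact heq)
    (fun h => hexc1 ⟨(sedge_eq h.1).symm, (sedge_eq h.2).symm⟩)
    (fun h => hexc2 ⟨(sedge_eq h.2).symm, (sedge_eq h.1).symm⟩)
  have h9 := h5 T hT5
  rw [himg] at h9
  omega
end

section
/- Let n ≥ 5 and let c be an edge-coloring of K_n such that every 5-vertex subset spans at least 9 colors. If c is not a proper edge-coloring, then c uses at least 3n − 7 colors in total. -/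
set_option maxHeartbeats 1000000 in
private lemma nine {n : ℕ} (col : Fin n → Fin n → ℕ)
    (hsym : ∀ x y, col x y = col y x)
    (h5 : ∀ s : Finset (Fin n), s.card = 5 →
      9 ≤ (s.offDiag.image (fun p => col p.1 p.2)).card)
    (v1 v2 v3 u w : Fin n) (h12 : v1 ≠ v2) (h13 : v1 ≠ v3) (h23 : v2 ≠ v3)
    (heq : col v1 v2 = col v1 v3)
    (hu1 : u ≠ v1) (hu2 : u ≠ v2) (hu3 : u ≠ v3)
    (hw1 : w ≠ v1) (hw2 : w ≠ v2) (hw3 : w ≠ v3) (huw : u ≠ w) :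
    List.Nodup [col v1 v2, col v2 v3, col u v1, col u v2, col u v3,
      col w v1, col w v2, col w v3, col u w] := by
  set l : List ℕ := [col v1 v2, col v2 v3, col u v1, col u v2, col u v3,
      col w v1, col w v2, col w v3, col u w] with hl
  have hs5 : ({v1, v2, v3, u, w} : Finset (Fin n)).card = 5 := by
    rw [Finset.card_insert_of_notMem (by
        simp only [Finset.mem_insert, Finset.mem_singleton]
        push_neg
        exact ⟨h12, h13, hu1.symm, hw1.symm⟩),
      Finset.card_insert_of_notMem (by
        simp only [Finset.mem_insert, Finset.mem_singleton]
        push_neg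
        exact ⟨h23, hu2.symm, hw2.symm⟩),
      Finset.card_insert_of_notMem (by
        simp only [Finset.mem_insert, Finset.mem_singleton]
        push_neg
        exact ⟨hu3.symm, hw3.symm⟩),
      Finset.card_insert_of_notMem (by simpa using huw),
      Finset.card_singleton]
  have h9 := h5 _ hs5
  have hsub : (({v1, v2, v3, u, w} : Finset (Fin n)).offDiag.image
      (fun p => col p.1 p.2)) ⊆ l.toFinset := by
    intro x hx
    simp only [Finset.mem_image] at hx
    obtain ⟨⟨p1, p2⟩, hp, rfl⟩ := hx
    simp only [Finset.mem_offDiag, Finset.mem_insert, Finset.mem_singleton] at hp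
    obtain ⟨hp1, hp2, hp3⟩ := hp
    simp only [hl, List.mem_toFinset, List.mem_cons, List.not_mem_nil, or_false]
    rcases hp1 with rfl | rfl | rfl | rfl | rfl <;>
      rcases hp2 with rfl | rfl | rfl | rfl | rfl <;>
      first
        | exact absurd rfl hp3
        | simp only [eq_self_iff_true, true_or, or_true]
        | (rw [hsym]; first
            | simp only [eq_self_iff_true, true_or, or_true]
            | (rw [← heq]; simp only [eq_self_iff_true, true_or, or_true]))
        | (rw [← heq]; simp only [eq_self_iff_true, true_or, or_true])
  have hle := Finset.card_le_card hsub
  rw [List.card_toFinset] at hle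
  have hdl : 9 ≤ l.dedup.length := le_trans h9 hle
  have hsubl := l.dedup_sublist
  have hlen : l.dedup.length ≤ 9 := le_trans hsubl.length_le (by simp [hl])
  have hlen9 : l.length = 9 := by simp [hl]
  have hde : l.dedup = l := hsubl.eq_of_length (by omega)
  rw [← hde]
  exact l.nodup_dedup

set_option maxHeartbeats 1000000 in
/-- K_n, every 5-subset spans ≥ 9 colors; if the coloring is not proper it uses at
least 3n - 7 colors. -/
theorem stmt_10 (n : ℕ) (hn : 5 ≤ n) (col : Fin n → Fin n → ℕ)
    (hsym : ∀ x y, col x y = col y x)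
    (h5 : ∀ s : Finset (Fin n), s.card = 5 →
      9 ≤ (s.offDiag.image (fun p => col p.1 p.2)).card)
    (hnotproper : ∃ v1 v2 v3 : Fin n, v1 ≠ v2 ∧ v1 ≠ v3 ∧ v2 ≠ v3 ∧
      col v1 v2 = col v1 v3) :
    3 * n - 7 ≤
      ((Finset.univ : Finset (Fin n)).offDiag.image (fun p => col p.1 p.2)).card := by
  obtain ⟨v1, v2, v3, h12, h13, h23, heq⟩ := hnotproper
  classical
  set T : Finset (Fin n) := Finset.univ \ {v1, v2, v3} with hTdef
  have hT3 : ({v1, v2, v3} : Finset (Fin n)).card = 3 := by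
    rw [Finset.card_insert_of_notMem (by simp [h12, h13]),
      Finset.card_insert_of_notMem (by simp [h23]), Finset.card_singleton]
  have hT : T.card = n - 3 := by
    rw [hTdef, Finset.card_sdiff_of_subset (Finset.subset_univ _), Finset.card_univ,
      Fintype.card_fin, hT3]
  have hTmem : ∀ u ∈ T, u ≠ v1 ∧ u ≠ v2 ∧ u ≠ v3 := by
    intro u hu
    simp only [hTdef, Finset.mem_sdiff, Finset.mem_univ, Finset.mem_insert,
      Finset.mem_singleton, true_and, not_or] at hu
    exact hu
  have facts : ∀ u ∈ T, ∀ w ∈ T, u ≠ w →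
      (col v1 v2 ≠ col v2 v3) ∧
      (col v1 v2 ≠ col u v1) ∧ (col v1 v2 ≠ col u v2) ∧ (col v1 v2 ≠ col u v3) ∧
      (col v2 v3 ≠ col u v1) ∧ (col v2 v3 ≠ col u v2) ∧ (col v2 v3 ≠ col u v3) ∧
      (col u v1 ≠ col u v2) ∧ (col u v1 ≠ col u v3) ∧ (col u v2 ≠ col u v3) ∧
      (col u v1 ≠ col w v1) ∧ (col u v1 ≠ col w v2) ∧ (col u v1 ≠ col w v3) ∧
      (col u v2 ≠ col w v1) ∧ (col u v2 ≠ col w v2) ∧ (col u v2 ≠ col w v3) ∧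
      (col u v3 ≠ col w v1) ∧ (col u v3 ≠ col w v2) ∧ (col u v3 ≠ col w v3) := by
    intro u hu w hw huw
    obtain ⟨hu1, hu2, hu3⟩ := hTmem u hu
    obtain ⟨hw1, hw2, hw3⟩ := hTmem w hw
    have hnd := nine col hsym h5 v1 v2 v3 u w h12 h13 h23 heq hu1 hu2 hu3 hw1 hw2 hw3 huw
    simp only [List.nodup_cons, List.mem_cons, List.not_mem_nil, or_false,
      not_or, List.nodup_nil, and_true] at hnd
    tauto
  have hT2 : 1 < T.card := by omega
  set g : Fin n → Finset ℕ := fun u => {col u v1, col u v2, col u v3} with hg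
  have hdisj : ∀ u ∈ T, ∀ w ∈ T, u ≠ w → Disjoint (g u) (g w) := by
    intro u hu w hw huw
    obtain ⟨-, -, -, -, -, -, -, -, -, -, e11, e12, e13, e21, e22, e23, e31, e32, e33⟩ :=
      facts u hu w hw huw
    simp only [hg, Finset.disjoint_left, Finset.mem_insert, Finset.mem_singleton]
    rintro a (rfl | rfl | rfl) <;> push_neg
    · exact ⟨e11, e12, e13⟩
    · exact ⟨e21, e22, e23⟩
    · exact ⟨e31, e32, e33⟩
  have hcard3 : ∀ u ∈ T, (g u).card = 3 := by
    intro u hu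
    obtain ⟨w, hw, hwu⟩ := Finset.exists_mem_ne hT2 u
    obtain ⟨-, -, -, -, -, -, -, d12, d13, d23, _⟩ := facts u hu w hw hwu.symm
    exact Finset.card_eq_three.mpr ⟨_, _, _, d12, d13, d23, rfl⟩
  have hbicard : (T.biUnion g).card = (n - 3) * 3 := by
    rw [Finset.card_biUnion hdisj, Finset.sum_congr rfl hcard3, Finset.sum_const,
      hT, smul_eq_mul]
  have h23notin : col v2 v3 ∉ T.biUnion g := by
    simp only [Finset.mem_biUnion, not_exists]
    rintro u ⟨hu, hmem⟩
    obtain ⟨w, hw, hwu⟩ := Finset.exists_mem_ne hT2 u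
    obtain ⟨-, -, -, -, c1, c2, c3, _⟩ := facts u hu w hw hwu.symm
    simp only [hg, Finset.mem_insert, Finset.mem_singleton] at hmem
    tauto
  have h12notin : col v1 v2 ∉ insert (col v2 v3) (T.biUnion g) := by
    simp only [Finset.mem_insert, Finset.mem_biUnion, not_or, not_exists]
    constructor
    · obtain ⟨u0, hu0, w0, hw0, h00⟩ := Finset.one_lt_card.mp hT2
      exact (facts u0 hu0 w0 hw0 h00).1
    · rintro u ⟨hu, hmem⟩
      obtain ⟨w, hw, hwu⟩ := Finset.exists_mem_ne hT2 u
      obtain ⟨-, b1, b2, b3, _⟩ := facts u hu w hw hwu.symm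
      simp only [hg, Finset.mem_insert, Finset.mem_singleton] at hmem
      tauto
  have hCcard : (insert (col v1 v2) (insert (col v2 v3) (T.biUnion g))).card
      = (n - 3) * 3 + 2 := by
    rw [Finset.card_insert_of_notMem h12notin,
      Finset.card_insert_of_notMem h23notin, hbicard]
  have hCsub : insert (col v1 v2) (insert (col v2 v3) (T.biUnion g)) ⊆
      Finset.univ.offDiag.image (fun p => col p.1 p.2) := by
    intro x hx
    simp only [Finset.mem_insert, Finset.mem_biUnion, hg, Finset.mem_singleton] at hx
    rcases hx with rfl | rfl | ⟨u, hu, hx⟩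
    · exact Finset.mem_image.mpr ⟨(v1, v2), by simp [Finset.mem_offDiag, h12], rfl⟩
    · exact Finset.mem_image.mpr ⟨(v2, v3), by simp [Finset.mem_offDiag, h23], rfl⟩
    · obtain ⟨hu1, hu2, hu3⟩ := hTmem u hu
      rcases hx with rfl | rfl | rfl
      · exact Finset.mem_image.mpr ⟨(u, v1), by simp [Finset.mem_offDiag, hu1], rfl⟩
      · exact Finset.mem_image.mpr ⟨(u, v2), by simp [Finset.mem_offDiag, hu2], rfl⟩
      · exact Finset.mem_image.mpr ⟨(u, v3), by simp [Finset.mem_offDiag, hu3], rfl⟩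
  have hfin := Finset.card_le_card hCsub
  rw [hCcard] at hfin
  omega
end

section
/- Let n ≥ 5 and let c be a proper edge-coloring of K_n using s colors such that every 5-vertex subset spans at least 9 colors. Then s satisfies the inequality s ≥ 4·C(n,2)/s − 3 + (3/2)·(n − 2·C(n,2)/s), where C(n,2) = n(n−1)/2. -/
namespace Stmt12Aux

lemma pair_ne_left {α : Type*} [DecidableEq α] {a b c d : α} (h1 : a ≠ c) (h2 : a ≠ d) :
    ({a, b} : Finset α) ≠ {c, d} := by
  intro h
  have : a ∈ ({c, d} : Finset α) := h ▸ Finset.mem_insert_self a {b}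
  simp only [Finset.mem_insert, Finset.mem_singleton] at this
  tauto

lemma pair_ne_right {α : Type*} [DecidableEq α] {a b c d : α} (h1 : b ≠ c) (h2 : b ≠ d) :
    ({a, b} : Finset α) ≠ {c, d} := by
  rw [Finset.pair_comm]; exact pair_ne_left h1 h2

lemma card_le_five {α : Type*} [DecidableEq α] (a b c d e : α) :
    ({a, b, c, d, e} : Finset α).card ≤ 5 := by
  refine le_trans (Finset.card_insert_le _ _) (Nat.add_le_add_right ?_ 1)
  refine le_trans (Finset.card_insert_le _ _) (Nat.add_le_add_right ?_ 1)
  refine le_trans (Finset.card_insert_le _ _) (Nat.add_le_add_right ?_ 1)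
  refine le_trans (Finset.card_insert_le _ _) (Nat.add_le_add_right ?_ 1)
  simp

variable {n : ℕ}


lemma card8_le_five {α : Type*} [DecidableEq α] (p q r s t : α) {a1 b1 a2 b2 c1 d1 c2 d2 : α}
    (h1 : a1 ∈ ({p, q, r, s, t} : Finset α)) (h2 : b1 ∈ ({p, q, r, s, t} : Finset α))
    (h3 : a2 ∈ ({p, q, r, s, t} : Finset α)) (h4 : b2 ∈ ({p, q, r, s, t} : Finset α))
    (h5 : c1 ∈ ({p, q, r, s, t} : Finset α)) (h6 : d1 ∈ ({p, q, r, s, t} : Finset α))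
    (h7 : c2 ∈ ({p, q, r, s, t} : Finset α)) (h8 : d2 ∈ ({p, q, r, s, t} : Finset α)) :
    ({a1, b1, a2, b2, c1, d1, c2, d2} : Finset α).card ≤ 5 := by
  refine le_trans (Finset.card_le_card ?_) (card_le_five p q r s t)
  intro z hz
  simp only [Finset.mem_insert, Finset.mem_singleton] at hz
  rcases hz with rfl | rfl | rfl | rfl | rfl | rfl | rfl | rfl <;> assumption


def rep (a b : Fin n) : Fin n × Fin n := if a < b then (a, b) else (b, a)

lemma rep_pair (a b : Fin n) : ({(rep a b).1, (rep a b).2} : Finset (Fin n)) = {a, b} := by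
  unfold rep; split <;> simp [Finset.pair_comm]

lemma rep_eq_imp {a b c d : Fin n} (h : rep a b = rep c d) :
    ({a, b} : Finset (Fin n)) = {c, d} := by
  rw [← rep_pair a b, ← rep_pair c d, h]

lemma rep_col (col : Fin n → Fin n → ℕ) (hsym : ∀ x y, col x y = col y x) (a b : Fin n) :
    col (rep a b).1 (rep a b).2 = col a b := by
  unfold rep; split
  · rfl
  · exact (hsym a b).symm

lemma rep_mem {T : Finset (Fin n)} {a b : Fin n} (ha : a ∈ T) (hb : b ∈ T) (hab : a ≠ b) :
    rep a b ∈ T.offDiag.filter (fun p => p.1 < p.2) := by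
  by_cases h : a < b
  · simp only [rep, if_pos h]
    simp [Finset.mem_offDiag, ha, hb, hab, h]
  · have h' : b < a := (hab.lt_or_gt).resolve_left h
    simp only [rep, if_neg h]
    simp [Finset.mem_offDiag, ha, hb, hab.symm, h']

lemma key (hn : 5 ≤ n) (col : Fin n → Fin n → ℕ)
    (hsym : ∀ x y, col x y = col y x)
    (h5 : ∀ s : Finset (Fin n), s.card = 5 →
      9 ≤ (s.offDiag.image (fun p => col p.1 p.2)).card)
    {a1 b1 a2 b2 c1 d1 c2 d2 : Fin n}
    (hsub : ({a1, b1, a2, b2, c1, d1, c2, d2} : Finset (Fin n)).card ≤ 5)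
    (h1ne : a1 ≠ b1) (h2ne : a2 ≠ b2) (h3ne : c1 ≠ d1) (h4ne : c2 ≠ d2)
    (e13 : ({a1, b1} : Finset (Fin n)) ≠ {c1, d1})
    (e21 : ({a2, b2} : Finset (Fin n)) ≠ {a1, b1})
    (e23 : ({a2, b2} : Finset (Fin n)) ≠ {c1, d1})
    (e41 : ({c2, d2} : Finset (Fin n)) ≠ {a1, b1})
    (e43 : ({c2, d2} : Finset (Fin n)) ≠ {c1, d1})
    (hc1 : col a1 b1 = col a2 b2) (hc2 : col c1 d1 = col c2 d2) : False := by
  obtain ⟨T, hTsub, hT5⟩ := Finset.exists_superset_card_eq hsub (by simpa using hn)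
  simp only [Finset.insert_subset_iff, Finset.singleton_subset_iff] at hTsub
  obtain ⟨ha1, hb1, ha2, hb2, hc1', hd1, hc2', hd2⟩ := hTsub
  set Q := T.offDiag.filter (fun p => p.1 < p.2) with hQ
  have h20 : T.offDiag.card = 20 := by rw [Finset.offDiag_card, hT5]
  -- Q has at most 10 elements
  have hQsub : Q ⊆ T.offDiag := Finset.filter_subset _ _
  have hswap : ∀ p ∈ Q, (p.2, p.1) ∈ T.offDiag \ Q := by
    intro p hp
    simp only [hQ, Finset.mem_filter, Finset.mem_offDiag] at hp
    simp only [Finset.mem_sdiff, hQ, Finset.mem_filter, Finset.mem_offDiag]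
    exact ⟨⟨hp.1.2.1, hp.1.1, (Finset.mem_offDiag.mp (hQsub (by simp [hQ, Finset.mem_filter, hp.1, hp.2]))).2.2.symm⟩,
      fun h => absurd h.2 (asymm hp.2)⟩
  have hQle : Q.card ≤ 10 := by
    have hinj : Set.InjOn (fun p : Fin n × Fin n => (p.2, p.1)) Q := by
      intro p _ q _ h
      simpa [Prod.ext_iff, and_comm] using h
    have := Finset.card_le_card_of_injOn _ hswap hinj
    have hsd : (T.offDiag \ Q).card = 20 - Q.card := by
      rw [Finset.card_sdiff_of_subset hQsub, h20]
    have hle : Q.card ≤ 20 := h20 ▸ Finset.card_le_card hQsub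
    omega
  set e1 := rep a1 b1 with he1
  set e2 := rep c1 d1 with he2
  have he1Q : e1 ∈ Q := rep_mem ha1 hb1 h1ne
  have he2Q : e2 ∈ Q := rep_mem hc1' hd1 h3ne
  have he12 : e1 ≠ e2 := fun h => e13 (rep_eq_imp h)
  have himg : T.offDiag.image (fun p => col p.1 p.2) ⊆
      ((Q.erase e1).erase e2).image (fun p => col p.1 p.2) := by
    intro t ht
    obtain ⟨p, hp, rfl⟩ := Finset.mem_image.mp ht
    have hp' := Finset.mem_offDiag.mp hp
    have hqQ : rep p.1 p.2 ∈ Q := rep_mem hp'.1 hp'.2.1 hp'.2.2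
    have hqcol : col (rep p.1 p.2).1 (rep p.1 p.2).2 = col p.1 p.2 := rep_col col hsym _ _
    by_cases hq1 : rep p.1 p.2 = e1
    · -- color equals col a1 b1, use rep a2 b2
      have : col p.1 p.2 = col a2 b2 := by
        rw [← hqcol, hq1, he1, rep_col col hsym, hc1]
      refine Finset.mem_image.mpr ⟨rep a2 b2, ?_, by rw [rep_col col hsym]; exact this.symm⟩
      refine Finset.mem_erase.mpr ⟨fun h => e23 (rep_eq_imp h), Finset.mem_erase.mpr
        ⟨fun h => e21 (rep_eq_imp h), rep_mem ha2 hb2 h2ne⟩⟩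
    by_cases hq2 : rep p.1 p.2 = e2
    · have : col p.1 p.2 = col c2 d2 := by
        rw [← hqcol, hq2, he2, rep_col col hsym, hc2]
      refine Finset.mem_image.mpr ⟨rep c2 d2, ?_, by rw [rep_col col hsym]; exact this.symm⟩
      refine Finset.mem_erase.mpr ⟨fun h => e43 (rep_eq_imp h), Finset.mem_erase.mpr
        ⟨fun h => e41 (rep_eq_imp h), rep_mem hc2' hd2 h4ne⟩⟩
    · exact Finset.mem_image.mpr ⟨rep p.1 p.2,
        Finset.mem_erase.mpr ⟨hq2, Finset.mem_erase.mpr ⟨hq1, hqQ⟩⟩, hqcol⟩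
  have h9 := h5 T hT5
  have hcard : ((Q.erase e1).erase e2).card = Q.card - 2 := by
    rw [Finset.card_erase_of_mem (Finset.mem_erase.mpr ⟨he12.symm, he2Q⟩),
      Finset.card_erase_of_mem he1Q]
    omega
  have := (Finset.card_le_card himg).trans (Finset.card_image_le)
  omega

end Stmt12Aux

open Stmt12Aux

set_option maxHeartbeats 2000000 in
/-- K_n, proper coloring with s colors, every 5-subset spans ≥ 9 colors. Then
s ≥ 4·C(n,2)/s − 3 + (3/2)·(n − 2·C(n,2)/s). -/
theorem stmt_12 (n : ℕ) (hn : 5 ≤ n) (col : Fin n → Fin n → ℕ)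
    (hsym : ∀ x y, col x y = col y x)
    (hproper : ∀ x y z : Fin n, x ≠ y → x ≠ z → y ≠ z → col x y ≠ col x z)
    (h5 : ∀ s : Finset (Fin n), s.card = 5 →
      9 ≤ (s.offDiag.image (fun p => col p.1 p.2)).card)
    (s : ℕ)
    (hs : s = ((Finset.univ : Finset (Fin n)).offDiag.image
      (fun p => col p.1 p.2)).card) :
    (s : ℚ) ≥ 4 * (n.choose 2 : ℚ) / s - 3
      + (3 / 2) * ((n : ℚ) - 2 * (n.choose 2 : ℚ) / s) := by
  classical
  set colp : Fin n × Fin n → ℕ := fun p => col p.1 p.2 with hcolp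
  set E := (Finset.univ : Finset (Fin n)).offDiag with hE
  have hEcard : E.card = n * n - n := by
    rw [hE, Finset.offDiag_card]; simp
  -- s ≥ 9
  have hs9 : 9 ≤ s := by
    obtain ⟨T, -, hT5⟩ := Finset.exists_superset_card_eq
      (s := (∅ : Finset (Fin n))) (by simp) (by simpa using hn)
    refine le_trans (h5 T hT5) ?_
    rw [hs]
    exact Finset.card_le_card (Finset.image_subset_image
      (fun p hp => by
        have := Finset.mem_offDiag.mp hp
        exact Finset.mem_offDiag.mpr ⟨Finset.mem_univ _, Finset.mem_univ _, this.2.2⟩))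
  have hs0 : 0 < s := by omega
  have hsQ : (0 : ℚ) < s := by exact_mod_cast hs0
  -- pigeonhole: a big color class
  have himgne : (E.image colp).Nonempty := by
    rw [← Finset.card_pos, ← hs]; omega
  have hsum : ∑ t ∈ E.image colp, (E.filter (fun p => colp p = t)).card = E.card :=
    (Finset.card_eq_sum_card_fiberwise (fun x hx => Finset.mem_image_of_mem _ hx)).symm
  obtain ⟨t0, ht0, hfib⟩ := Finset.exists_le_of_sum_le (f := fun _ => (E.card : ℚ) / s)
      (g := fun t => ((E.filter (fun p => colp p = t)).card : ℚ)) himgne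
      (by
        rw [Finset.sum_const, ← hs, nsmul_eq_mul, mul_div_cancel₀ _ (ne_of_gt hsQ)]
        rw [← Nat.cast_sum, hsum])
  set F := E.filter (fun p => colp p = t0) with hF
  obtain ⟨p0, hp0E, hp0c⟩ := Finset.mem_image.mp ht0
  set u := p0.1 with hu
  set v := p0.2 with hv
  have huv : u ≠ v := (Finset.mem_offDiag.mp hp0E).2.2
  have hcoluv : col u v = t0 := hp0c
  have hp0F : (u, v) ∈ F := by
    rw [hF, Finset.mem_filter]
    exact ⟨by simpa using hp0E, hp0c⟩
  -- symmetric membership helper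
  have hmemF : ∀ x y : Fin n, x ≠ y → col x y = t0 → (x, y) ∈ F := by
    intro x y hxy hc
    rw [hF, Finset.mem_filter]
    exact ⟨Finset.mem_offDiag.mpr ⟨Finset.mem_univ _, Finset.mem_univ _, hxy⟩, hc⟩
  set A := F.image Prod.fst with hA
  have hmemA : ∀ x y : Fin n, x ≠ y → col x y = t0 → x ∈ A := by
    intro x y hxy hc
    exact Finset.mem_image.mpr ⟨(x, y), hmemF x y hxy hc, rfl⟩
  have huA : u ∈ A := hmemA u v huv hcoluv
  have hvA : v ∈ A := hmemA v u huv.symm (by rw [hsym]; exact hcoluv)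
  -- partner
  have partner : ∀ x ∈ A, x ≠ u → x ≠ v → ∃ y, y ≠ u ∧ y ≠ v ∧ y ≠ x ∧ col x y = t0 := by
    intro x hx hxu hxv
    obtain ⟨p, hpF, hpx⟩ := Finset.mem_image.mp hx
    have hpE : p ∈ E := Finset.mem_filter.mp hpF |>.1
    have hpne : p.1 ≠ p.2 := (Finset.mem_offDiag.mp hpE).2.2
    have hpc : col p.1 p.2 = t0 := (Finset.mem_filter.mp hpF).2
    have hpc' : col x p.2 = t0 := by rw [← hpx]; exact hpc
    refine ⟨p.2, ?_, ?_, by rw [hpx] at hpne; exact hpne.symm, hpc'⟩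
    · intro h
      have hcol : col u x = col u v := by
        rw [hsym u x, hcoluv]
        rw [h] at hpc'
        exact hpc'
      exact hproper u x v hxu.symm huv hxv hcol
    · intro h
      have hcol : col v x = col v u := by
        rw [hsym v x, hsym v u, hcoluv]
        rw [h] at hpc'
        exact hpc'
      exact hproper v x u hxv.symm huv.symm hxu hcol
  -- injectivity of fst on F
  have hAcard : A.card = F.card := by
    rw [hA]
    apply Finset.card_image_of_injOn
    intro p hp q hq hpq
    have hpE := (Finset.mem_filter.mp hp).1
    have hqE := (Finset.mem_filter.mp hq).1
    have hp2 : col p.1 p.2 = t0 := (Finset.mem_filter.mp hp).2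
    have hq2 : col q.1 q.2 = t0 := (Finset.mem_filter.mp hq).2
    have h1 : p.1 ≠ p.2 := (Finset.mem_offDiag.mp hpE).2.2
    have h2 : q.1 ≠ q.2 := (Finset.mem_offDiag.mp hqE).2.2
    have : p.2 = q.2 := by
      by_contra hne
      exact hproper p.1 p.2 q.2 h1 (hpq ▸ h2) hne (by rw [hp2, ← hq2, hpq])
    exact Prod.ext hpq this
  have L1 : ∀ x y : Fin n, x ∈ A → x ≠ u → x ≠ v → y ≠ u → y ≠ v → col u x ≠ col v y := by
    intro x y hxA hxu hxv hyu hyv heq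
    obtain ⟨x', hx'u, hx'v, hx'x, hcx⟩ := partner x hxA hxu hxv
    refine key hn col hsym h5 (a1 := u) (b1 := v) (a2 := x) (b2 := x') (c1 := u) (d1 := x) (c2 := v) (d2 := y)
      ?_ huv hx'x.symm hxu.symm hyv.symm
      (pair_ne_right huv.symm hxv.symm)
      (pair_ne_left hxu hxv)
      (pair_ne_right hx'u hx'x)
      (pair_ne_right hyu hyv)
      (pair_ne_left huv.symm hxv.symm)
      (by rw [hcoluv, ← hcx]) heq
    exact card8_le_five u v x x' y (by simp) (by simp) (by simp) (by simp)
      (by simp) (by simp) (by simp) (by simp)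
  have L2 : ∀ x y : Fin n, x ∈ A → x ≠ u → x ≠ v → y ≠ u → y ≠ v → col v x ≠ col u y := by
    intro x y hxA hxu hxv hyu hyv heq
    obtain ⟨x', hx'u, hx'v, hx'x, hcx⟩ := partner x hxA hxu hxv
    refine key hn col hsym h5 (a1 := u) (b1 := v) (a2 := x) (b2 := x') (c1 := v) (d1 := x) (c2 := u) (d2 := y)
      ?_ huv hx'x.symm hxv.symm hyu.symm
      (pair_ne_left huv hxu.symm)
      (pair_ne_left hxu hxv)
      (pair_ne_right hx'v hx'x)
      (pair_ne_right hyu hyv)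
      (pair_ne_left huv hxu.symm)
      (by rw [hcoluv, ← hcx]) heq
    exact card8_le_five u v x x' y (by simp) (by simp) (by simp) (by simp)
      (by simp) (by simp) (by simp) (by simp)
  -- sets
  set A' := (A.erase u).erase v with hA'
  have hA'mem : ∀ x ∈ A', x ≠ u ∧ x ≠ v ∧ x ∈ A := by
    intro x hx
    rw [hA', Finset.mem_erase, Finset.mem_erase] at hx
    exact ⟨hx.2.1, hx.1, hx.2.2⟩
  have hA'card : A'.card + 2 = A.card := by
    rw [hA', Finset.card_erase_of_mem (Finset.mem_erase.mpr ⟨huv.symm, hvA⟩),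
      Finset.card_erase_of_mem huA]
    have h2 : 2 ≤ A.card := by
      have : ({u, v} : Finset (Fin n)) ⊆ A := by
        intro z hz; simp only [Finset.mem_insert, Finset.mem_singleton] at hz
        rcases hz with rfl | rfl; exacts [huA, hvA]
      calc 2 = ({u, v} : Finset (Fin n)).card := by
              rw [Finset.card_insert_of_notMem (by simp [huv]), Finset.card_singleton]
        _ ≤ A.card := Finset.card_le_card this
    omega
  set Bset := (Finset.univ : Finset (Fin n)) \ A with hB
  have hBmem : ∀ w ∈ Bset, w ∉ A := by
    intro w hw; exact (Finset.mem_sdiff.mp hw).2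
  have hBu : ∀ w ∈ Bset, w ≠ u := fun w hw h => hBmem w hw (h ▸ huA)
  have hBv : ∀ w ∈ Bset, w ≠ v := fun w hw h => hBmem w hw (h ▸ hvA)
  have hBcard : A.card + Bset.card = n := by
    rw [hB, Finset.card_sdiff_of_subset (Finset.subset_univ _)]
    have h1 : A.card ≤ n := by
      calc A.card ≤ (Finset.univ : Finset (Fin n)).card := Finset.card_le_card (Finset.subset_univ _)
        _ = n := by simp
    simp only [Finset.card_univ, Fintype.card_fin]
    omega
  set U1 := A'.image (col u) with hU1
  set U2 := A'.image (col v) with hU2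
  set S1 := insert t0 (U1 ∪ U2) with hS1def
  set Bu := Bset.image (col u) with hBudef
  set Bv := Bset.image (col v) with hBvdef
  set S2 := Bu ∪ Bv with hS2def
  set D := Bu ∩ Bv with hDdef
  -- cardinalities
  have injcolu : ∀ (X : Finset (Fin n)), (∀ x ∈ X, x ≠ u) → (X.image (col u)).card = X.card := by
    intro X hX
    apply Finset.card_image_of_injOn
    intro x hx y hy hxy
    by_contra hne
    exact hproper u x y (hX x hx).symm (hX y hy).symm hne hxy
  have injcolv : ∀ (X : Finset (Fin n)), (∀ x ∈ X, x ≠ v) → (X.image (col v)).card = X.card := by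
    intro X hX
    apply Finset.card_image_of_injOn
    intro x hx y hy hxy
    by_contra hne
    exact hproper v x y (hX x hx).symm (hX y hy).symm hne hxy
  have hU1card : U1.card = A'.card := injcolu A' (fun x hx => (hA'mem x hx).1)
  have hU2card : U2.card = A'.card := injcolv A' (fun x hx => (hA'mem x hx).2.1)
  have hU12 : Disjoint U1 U2 := by
    rw [Finset.disjoint_left]
    intro t ht1 ht2
    obtain ⟨x, hx, hxc⟩ := Finset.mem_image.mp ht1
    obtain ⟨y, hy, hyc⟩ := Finset.mem_image.mp ht2
    obtain ⟨hxu, hxv, hxA⟩ := hA'mem x hx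
    obtain ⟨hyu, hyv, -⟩ := hA'mem y hy
    exact L1 x y hxA hxu hxv hyu hyv (by rw [hxc, hyc])
  have ht0U : t0 ∉ U1 ∪ U2 := by
    intro ht
    rcases Finset.mem_union.mp ht with h | h
    · obtain ⟨x, hx, hxc⟩ := Finset.mem_image.mp h
      obtain ⟨hxu, hxv, -⟩ := hA'mem x hx
      exact hproper u x v hxu.symm huv hxv (by rw [hxc, hcoluv])
    · obtain ⟨x, hx, hxc⟩ := Finset.mem_image.mp h
      obtain ⟨hxu, hxv, -⟩ := hA'mem x hx
      exact hproper v x u hxv.symm huv.symm hxu (by rw [hxc, hsym v u, hcoluv])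
  have hS1card : S1.card + 3 = 2 * A.card := by
    rw [hS1def, Finset.card_insert_of_notMem ht0U, Finset.card_union_of_disjoint hU12,
      hU1card, hU2card]
    omega
  have hBucard : Bu.card = Bset.card := injcolu Bset hBu
  have hBvcard : Bv.card = Bset.card := injcolv Bset hBv
  have hS2card : S2.card + D.card = 2 * Bset.card := by
    rw [hS2def, hDdef, Finset.card_union_add_card_inter, hBucard, hBvcard]; omega
  -- the doubled colors form a matching on Bset
  set W : ℕ → Finset (Fin n) := fun c => Bset.filter (fun w => col u w = c ∨ col v w = c) with hW
  have hW2 : ∀ c ∈ D, (W c).card = 2 := by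
    intro c hc
    obtain ⟨hcu, hcv⟩ := Finset.mem_inter.mp hc
    obtain ⟨w, hwB, hwc⟩ := Finset.mem_image.mp hcu
    obtain ⟨w', hw'B, hw'c⟩ := Finset.mem_image.mp hcv
    have hww' : w ≠ w' := by
      intro h; subst h
      apply hproper w u v (hBu w hwB) (hBv w hwB) huv
      rw [hsym w u, hsym w v, hwc, hw'c]
    have hWeq : W c = {w, w'} := by
      ext z
      simp only [hW, Finset.mem_filter, Finset.mem_insert, Finset.mem_singleton]
      constructor
      · rintro ⟨hzB, hz | hz⟩
        · left
          by_contra hne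
          exact hproper u z w (hBu z hzB).symm (hBu w hwB).symm hne (by rw [hz, hwc])
        · right
          by_contra hne
          exact hproper v z w' (hBv z hzB).symm (hBv w' hw'B).symm hne (by rw [hz, hw'c])
      · rintro (rfl | rfl)
        exacts [⟨hwB, Or.inl hwc⟩, ⟨hw'B, Or.inr hw'c⟩]
    rw [hWeq, Finset.card_insert_of_notMem (by simp [hww']), Finset.card_singleton]
  have hWdisj : ∀ c ∈ D, ∀ c' ∈ D, c ≠ c' → Disjoint (W c) (W c') := by
    have aux : ∀ c c' z, c ∈ D → c' ∈ D → c ≠ c' → z ∈ Bset →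
        col u z = c → col v z = c' → False := by
      intro c c' z hc hc' hne hzB hzc hzc'
      obtain ⟨-, hcv⟩ := Finset.mem_inter.mp hc
      obtain ⟨hc'u, -⟩ := Finset.mem_inter.mp hc'
      obtain ⟨w1, hw1B, hw1c⟩ := Finset.mem_image.mp hcv
      obtain ⟨x1, hx1B, hx1c⟩ := Finset.mem_image.mp hc'u
      have hzx1 : z ≠ x1 := by
        intro h; subst h; exact hne (by rw [← hzc, ← hx1c])
      refine key hn col hsym h5 (a1 := u) (b1 := z) (a2 := v) (b2 := w1) (c1 := u) (d1 := x1)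
        (c2 := v) (d2 := z)
        ?_ (hBu z hzB).symm (hBv w1 hw1B).symm (hBu x1 hx1B).symm (hBv z hzB).symm
        (pair_ne_right (hBu z hzB) hzx1)
        (pair_ne_left huv.symm (hBv z hzB).symm)
        (pair_ne_left huv.symm (hBv x1 hx1B).symm)
        (pair_ne_left huv.symm (hBv z hzB).symm)
        (pair_ne_left huv.symm (hBv x1 hx1B).symm)
        (by rw [hzc, ← hw1c]) (by rw [hx1c, ← hzc'])
      exact card8_le_five u z v w1 x1 (by simp) (by simp) (by simp) (by simp)
        (by simp) (by simp) (by simp) (by simp)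
    intro c hc c' hc' hne
    rw [Finset.disjoint_left]
    intro z hz hz'
    simp only [hW, Finset.mem_filter] at hz hz'
    obtain ⟨hzB, hz⟩ := hz
    obtain ⟨-, hz'⟩ := hz'
    rcases hz with hz | hz <;> rcases hz' with hz' | hz'
    · exact hne (by rw [← hz, ← hz'])
    · exact aux c c' z hc hc' hne hzB hz hz'
    · exact aux c' c z hc' hc hne.symm hzB hz' hz
    · exact hne (by rw [← hz, ← hz'])
  have h2d : 2 * D.card ≤ Bset.card := by
    have hb : (D.biUnion W).card = ∑ c ∈ D, (W c).card := Finset.card_biUnion hWdisj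
    have hsum2 : ∑ c ∈ D, (W c).card = 2 * D.card := by
      rw [Finset.sum_congr rfl hW2, Finset.sum_const, smul_eq_mul, mul_comm]
    have hsubB : D.biUnion W ⊆ Bset :=
      Finset.biUnion_subset.mpr (fun c _ => Finset.filter_subset _ _)
    calc 2 * D.card = (D.biUnion W).card := by rw [hb, hsum2]
      _ ≤ Bset.card := Finset.card_le_card hsubB
  -- S1 and S2 are disjoint
  have hS12 : Disjoint S1 S2 := by
    rw [Finset.disjoint_left]
    intro t ht1 ht2
    have hcases2 : (∃ w ∈ Bset, col u w = t) ∨ (∃ w ∈ Bset, col v w = t) := by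
      rcases Finset.mem_union.mp ht2 with h | h
      · exact Or.inl (Finset.mem_image.mp h |>.imp (fun w hw => ⟨hw.1, hw.2⟩))
      · exact Or.inr (Finset.mem_image.mp h |>.imp (fun w hw => ⟨hw.1, hw.2⟩))
    rcases Finset.mem_insert.mp ht1 with rfl | ht1'
    · rcases hcases2 with ⟨w, hwB, hwc⟩ | ⟨w, hwB, hwc⟩
      · exact hproper u w v (hBu w hwB).symm huv (hBv w hwB) (by rw [hwc, hcoluv])
      · exact hproper v w u (hBv w hwB).symm huv.symm (hBu w hwB) (by rw [hwc, hsym v u, hcoluv])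
    rcases Finset.mem_union.mp ht1' with h | h
    · obtain ⟨x, hx, hxc⟩ := Finset.mem_image.mp h
      obtain ⟨hxu, hxv, hxA⟩ := hA'mem x hx
      rcases hcases2 with ⟨w, hwB, hwc⟩ | ⟨w, hwB, hwc⟩
      · have hxw : x ≠ w := fun h => hBmem w hwB (h ▸ hxA)
        exact hproper u x w hxu.symm (hBu w hwB).symm hxw (by rw [hxc, hwc])
      · exact L1 x w hxA hxu hxv (hBu w hwB) (hBv w hwB) (by rw [hxc, hwc])
    · obtain ⟨x, hx, hxc⟩ := Finset.mem_image.mp h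
      obtain ⟨hxu, hxv, hxA⟩ := hA'mem x hx
      rcases hcases2 with ⟨w, hwB, hwc⟩ | ⟨w, hwB, hwc⟩
      · exact L2 x w hxA hxu hxv (hBu w hwB) (hBv w hwB) (by rw [hxc, hwc])
      · have hxw : x ≠ w := fun h => hBmem w hwB (h ▸ hxA)
        exact hproper v x w hxv.symm (hBv w hwB).symm hxw (by rw [hxc, hwc])
  -- everything is a color
  have hsubimg : S1 ∪ S2 ⊆ E.image colp := by
    intro t ht
    have hmk : ∀ a b : Fin n, a ≠ b → col a b = t → t ∈ E.image colp := by
      intro a b hab hc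
      exact Finset.mem_image.mpr ⟨(a, b),
        Finset.mem_offDiag.mpr ⟨Finset.mem_univ _, Finset.mem_univ _, hab⟩, hc⟩
    rcases Finset.mem_union.mp ht with h | h
    · rcases Finset.mem_insert.mp h with rfl | h'
      · exact hmk u v huv hcoluv
      · rcases Finset.mem_union.mp h' with h'' | h''
        · obtain ⟨x, hx, hxc⟩ := Finset.mem_image.mp h''
          exact hmk u x (fun hh => (hA'mem x hx).1 hh.symm) hxc
        · obtain ⟨x, hx, hxc⟩ := Finset.mem_image.mp h''
          exact hmk v x (fun hh => (hA'mem x hx).2.1 hh.symm) hxc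
    · rcases Finset.mem_union.mp h with h'' | h''
      · obtain ⟨w, hw, hwc⟩ := Finset.mem_image.mp h''
        exact hmk u w (fun hh => hBu w hw hh.symm) hwc
      · obtain ⟨w, hw, hwc⟩ := Finset.mem_image.mp h''
        exact hmk v w (fun hh => hBv w hw hh.symm) hwc
  have hle : S1.card + S2.card ≤ s := by
    rw [← Finset.card_union_of_disjoint hS12, hs]
    exact Finset.card_le_card hsubimg
  -- rational arithmetic
  have hq2 : (n : ℚ) * n - n ≤ (A.card : ℚ) * s := by
    have h1 : (E.card : ℚ) ≤ (A.card : ℚ) * s := by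
      rw [hAcard]
      exact (div_le_iff₀ hsQ).mp hfib
    have h2 : (E.card : ℚ) = (n : ℚ) * n - n := by
      rw [hEcard, Nat.cast_sub (Nat.le_mul_of_pos_left n (by omega))]
      push_cast; ring
    linarith [h2 ▸ h1]
  have hkeyQ : (A.card : ℚ) / 2 + 3 * n / 2 - 3 ≤ (s : ℚ) := by
    have c1 : (S1.card : ℚ) + 3 = 2 * A.card := by exact_mod_cast hS1card
    have c2 : (S2.card : ℚ) + D.card = 2 * Bset.card := by exact_mod_cast hS2card
    have c3 : 2 * (D.card : ℚ) ≤ Bset.card := by exact_mod_cast h2d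
    have c4 : (A.card : ℚ) + Bset.card = n := by exact_mod_cast hBcard
    have c5 : (S1.card : ℚ) + S2.card ≤ s := by exact_mod_cast hle
    linarith
  have hc2q : (n.choose 2 : ℚ) = (n : ℚ) * ((n : ℚ) - 1) / 2 := Nat.cast_choose_two (K := ℚ) n
  have hfin : (n.choose 2 : ℚ) ≤ ((s : ℚ) - 3 * n / 2 + 3) * s := by
    rw [hc2q]
    nlinarith [mul_le_mul_of_nonneg_right hkeyQ hsQ.le, hq2]
  have hdiv : (n.choose 2 : ℚ) / s ≤ (s : ℚ) - 3 * n / 2 + 3 := (div_le_iff₀ hsQ).mpr hfin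
  have heq : 4 * (n.choose 2 : ℚ) / s - 3 + (3 / 2) * ((n : ℚ) - 2 * (n.choose 2 : ℚ) / s)
      = (n.choose 2 : ℚ) / s + 3 * n / 2 - 3 := by ring
  rw [ge_iff_le, heq]
  linarith
end

section
/- Let c be an edge-coloring of K_{2,n} with parts {u,v} and second part {v_1,...,v_n} (n ≥ 4), such that every copy of K_{2,3} receives at least 5 colors. Suppose some color a appears exactly twice among edges incident to u, on edges (u,v_1) and (u,v_2), and the colors on edges incident to v are pairwise distinct. Then c(v,v_1) ≠ c(v,v_2), and neither c(v,v_1) nor c(v,v_2) nor a appears on any edge of K_{2,n} not incident to {v_1, v_2}. -/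
lemma card4_le (w x y z : ℕ) : ({w, x, y, z} : Finset ℕ).card ≤ 4 := by
  have h1 := Finset.card_insert_le w ({x, y, z} : Finset ℕ)
  have h2 := Finset.card_insert_le x ({y, z} : Finset ℕ)
  have h3 := Finset.card_insert_le y ({z} : Finset ℕ)
  simp at *
  omega

/-- Deletion step: K_{2,n} (n ≥ 4), every K_{2,3} gets ≥ 5 colors; color a appears
exactly twice at u, on (u,v_{i₁}) and (u,v_{i₂}), and the colors at v are pairwise
distinct. Then c(v,v_{i₁}) ≠ c(v,v_{i₂}) and none of a, c(v,v_{i₁}), c(v,v_{i₂})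
appears on an edge avoiding v_{i₁}, v_{i₂}. -/
theorem stmt_16 (n : ℕ) (hn : 4 ≤ n) (c : Fin 2 → Fin n → ℕ)
    (hK23 : ∀ i j k : Fin n, i ≠ j → i ≠ k → j ≠ k →
      5 ≤ ({c 0 i, c 0 j, c 0 k, c 1 i, c 1 j, c 1 k} : Finset ℕ).card)
    (a : ℕ) (i1 i2 : Fin n) (hi : i1 ≠ i2)
    (ha1 : c 0 i1 = a) (ha2 : c 0 i2 = a)
    (hexact : ∀ i : Fin n, c 0 i = a → i = i1 ∨ i = i2)
    (hvdist : ∀ i j : Fin n, i ≠ j → c 1 i ≠ c 1 j) :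
    c 1 i1 ≠ c 1 i2 ∧
    ∀ (x : Fin 2) (i : Fin n), i ≠ i1 → i ≠ i2 →
      c x i ∉ ({a, c 1 i1, c 1 i2} : Finset ℕ) := by
  refine ⟨hvdist i1 i2 hi, ?_⟩
  intro x i h1 h2 hmem
  have h := hK23 i1 i2 i hi (fun h => h1 h.symm) (fun h => h2 h.symm)
  rw [ha1, ha2] at h
  simp only [Finset.mem_insert, Finset.mem_singleton] at hmem
  -- In every case, the six edge colors collapse to ≤ 4 distinct values
  have hsub : ({a, a, c 0 i, c 1 i1, c 1 i2, c 1 i} : Finset ℕ).card ≤ 4 := by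
    have hx : x = 0 ∨ x = 1 := by omega
    rcases hx with hx | hx <;> subst hx
    · rcases hmem with h' | h' | h' <;> rw [h'] <;>
        exact le_trans (Finset.card_le_card (by intro y hy; simp at hy ⊢; tauto))
          (card4_le a (c 1 i1) (c 1 i2) (c 1 i))
    · rcases hmem with h' | h' | h' <;> rw [h'] <;>
        exact le_trans (Finset.card_le_card (by intro y hy; simp at hy ⊢; tauto))
          (card4_le a (c 0 i) (c 1 i1) (c 1 i2))
  omega
end

section
/- Let n ≥ 5 and let c be a proper edge-coloring of K_n using s colors such that every 4-edge path or cycle receives at least 3 colors. Let a be a color, A the set of vertices incident to an edge of color a, and u,v ∈ A with c(u,v) = a. Then for any vertex x with x ∈ A and any vertex y ∉ {u,v}, if (u,x) is an edge with both endpoints in A and (v,y) is any edge, then c(u,x) ≠ c(v,y), provided x ≠ v and y ≠ u and {u,x} ≠ {v,y}. -/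
/-- K_n, proper coloring with every 4-edge path/cycle at least 3-colored; A is the
set of endpoints of a-colored edges, u,v ∈ A with c(u,v) = a.  If x ∈ A (so (u,x)
is an edge in A) and y ∉ {u,v}, with the edges {u,x} and {v,y} distinct, then
c(u,x) ≠ c(v,y). -/
theorem stmt_17 (n : ℕ) (hn : 5 ≤ n) (col : Fin n → Fin n → ℕ)
    (hsym : ∀ x y, col x y = col y x)
    (hproper : ∀ x y z : Fin n, x ≠ y → x ≠ z → y ≠ z → col x y ≠ col x z)
    (hPath : ∀ a b c d e : Fin n, ([a, b, c, d, e] : List (Fin n)).Nodup →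
      3 ≤ ({col a b, col b c, col c d, col d e} : Finset ℕ).card)
    (hCycle : ∀ a b c d : Fin n, ([a, b, c, d] : List (Fin n)).Nodup →
      3 ≤ ({col a b, col b c, col c d, col d a} : Finset ℕ).card)
    (a : ℕ) (u v : Fin n) (huv : u ≠ v) (hcuv : col u v = a) :
    ∀ x y : Fin n, x ≠ u → x ≠ v → (∃ z : Fin n, z ≠ x ∧ col x z = a) →
      y ≠ u → y ≠ v → ({u, x} : Finset (Fin n)) ≠ {v, y} →
      col u x ≠ col v y := by
  rintro x y hxu hxv ⟨z, hzx, hza⟩ hyu hyv _ heq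
  have hxy : x ≠ y := by
    rintro rfl
    exact hproper x u v hxu hxv huv (by rw [hsym x u, hsym x v, heq])
  have hzu : z ≠ u := fun h => hproper u x v (Ne.symm hxu) huv hxv
    (by rw [h] at hza; rw [hsym u x, hza, hcuv])
  have hzv : z ≠ v := fun h => hproper v x u (Ne.symm hxv) (Ne.symm huv) hxu
    (by rw [h] at hza; rw [hsym v x, hza, hsym v u, hcuv])
  have hcard : ∀ s : Finset ℕ, s = {a, col u x} → ¬ 3 ≤ s.card := by
    rintro s rfl h
    have := Finset.card_insert_le a ({col u x} : Finset ℕ)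
    simp at this
    omega
  by_cases hzy : z = y
  · subst hzy
    refine hcard _ ?_ (hCycle u v z x (by simp [huv, hyu, hyv, hxu, hxv, hxy,
      Ne.symm hxy, Ne.symm hyu, Ne.symm hyv, Ne.symm hxu, Ne.symm hxv]))
    rw [hcuv, ← heq, hsym z x, hza, hsym x u]
    ext w; simp
  · refine hcard _ ?_ (hPath z x u v y (by simp [huv, hyu, hyv, hxu, hxv, hxy,
      hzx, hzu, hzv, hzy, Ne.symm hxy, Ne.symm hyu, Ne.symm hyv, Ne.symm hxu,
      Ne.symm hxv]))
    rw [hcuv, ← heq, hsym z x, hza, hsym x u]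
    ext w; simp
end
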